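/- arXiv:1510.03395 — 2 statements merged into one kernel-verified Lean document; each statement's English description precedes it below -/
import Mathlib

section
/- In an inverse semiloopoid G over M, the inversion is involutive: (g⁻¹)⁻¹ = g for every g ∈ G. -/
/-- A semiloopoid over a set of units `M ⊆ G`: maps `α, β : G → M ⊆ G` fixing
units, a set `G₂` of composable pairs, and a partial multiplication `m : G₂ → G`
such that `α(g)g = g`, `gβ(g) = g`, and all left and right translations are
injective on their domains. -/
structure Semiloopoid (G : Type*) where
  M : Set G
  α : G → G
  β : G → G
  α_mem : ∀ g : G, α g ∈ M
  β_mem : ∀ g : G, β g ∈ M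
  α_unit : ∀ u ∈ M, α u = u
  β_unit : ∀ u ∈ M, β u = u
  G₂ : Set (G × G)
  mul : (g : G) → (h : G) → (g, h) ∈ G₂ → G
  unit_left_comp : ∀ g : G, (α g, g) ∈ G₂
  unit_left : ∀ g : G, mul (α g) g (unit_left_comp g) = g
  unit_right_comp : ∀ g : G, (g, β g) ∈ G₂
  unit_right : ∀ g : G, mul g (β g) (unit_right_comp g) = g
  left_inj : ∀ (g h h' : G) (p : (g, h) ∈ G₂) (p' : (g, h') ∈ G₂),
    mul g h p = mul g h' p' → h = h'
  right_inj : ∀ (g h h' : G) (p : (h, g) ∈ G₂) (p' : (h', g) ∈ G₂),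
    mul h g p = mul h' g p' → h = h'

/-- An inverse semiloopoid: a semiloopoid with an inversion `ι(g) = g⁻¹` such
that whenever `(g,h) ∈ G₂` also `(g⁻¹, gh) ∈ G₂` with `g⁻¹(gh) = h`, and
whenever `(u,g) ∈ G₂` also `(ug, g⁻¹) ∈ G₂` with `(ug)g⁻¹ = u`. -/
structure InverseSemiloopoid (G : Type*) extends Semiloopoid G where
  inv : G → G
  inv_left_comp : ∀ (g h : G) (p : (g, h) ∈ G₂), (inv g, mul g h p) ∈ G₂
  inv_left : ∀ (g h : G) (p : (g, h) ∈ G₂),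
    mul (inv g) (mul g h p) (inv_left_comp g h p) = h
  inv_right_comp : ∀ (u g : G) (p : (u, g) ∈ G₂), (mul u g p, inv g) ∈ G₂
  inv_right : ∀ (u g : G) (p : (u, g) ∈ G₂),
    mul (mul u g p) (inv g) (inv_right_comp u g p) = u

/-! Since `α(g) g = g`, the right inverse law gives `g g⁻¹ = α(g)`; applied once more it gives
`α(g) (g⁻¹)⁻¹ = g = α(g) g`, and left cancellation by `α(g)` concludes. -/

namespace InverseSemiloopoid

variable {G : Type*} (S : InverseSemiloopoid G)

theorem inv_right_comp_of_mul_eq {u g v : G} (p : (u, g) ∈ S.G₂) (e : S.mul u g p = v) :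
    (v, S.inv g) ∈ S.G₂ :=
  e ▸ S.inv_right_comp u g p

theorem inv_right_of_mul_eq {u g v : G} (p : (u, g) ∈ S.G₂) (e : S.mul u g p = v) :
    S.mul v (S.inv g) (S.inv_right_comp_of_mul_eq p e) = u := by
  subst e
  exact S.inv_right u g p

theorem mul_inv_comp (g : G) : (g, S.inv g) ∈ S.G₂ :=
  S.inv_right_comp_of_mul_eq (S.unit_left_comp g) (S.unit_left g)

theorem mul_inv_eq_α (g : G) : S.mul g (S.inv g) (S.mul_inv_comp g) = S.α g :=
  S.inv_right_of_mul_eq (S.unit_left_comp g) (S.unit_left g)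

end InverseSemiloopoid

/-- In an inverse semiloopoid `G` over `M`, the inversion is involutive:
`(g⁻¹)⁻¹ = g` for every `g ∈ G`. -/
theorem inverseSemiloopoid_inv_inv {G : Type*}
    (S : InverseSemiloopoid G) (g : G) :
    S.inv (S.inv g) = g := by
  have hα : S.mul (S.α g) (S.inv (S.inv g)) _ = g :=
    S.inv_right_of_mul_eq (S.mul_inv_comp g) (S.mul_inv_eq_α g)
  exact S.left_inj _ _ _ _ _ (hα.trans (S.unit_left g).symm)
end

section
/- If a semiloopoid G over M satisfies the unities associativity condition, then for every composable pair (g,h) ∈ G₂ one has β(g) = α(h), α(gh) = α(g), and β(gh) = β(h); in particular the anchor map (α,β) : G → M×M respects the multiplication of the pair groupoid M×M. -/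
/-- The unities associativity condition for a semiloopoid: for all `x, y, z ∈ G`
with at least one of them a unit, `(xy)z` is defined iff `x(yz)` is defined, and
then the two products coincide. -/
def Semiloopoid.UnitiesAssoc {G : Type*} (S : Semiloopoid G) : Prop :=
  ∀ x y z : G, (x ∈ S.M ∨ y ∈ S.M ∨ z ∈ S.M) →
    ((∃ p : (x, y) ∈ S.G₂, (S.mul x y p, z) ∈ S.G₂) ↔
      (∃ q : (y, z) ∈ S.G₂, (x, S.mul y z q) ∈ S.G₂)) ∧
    ∀ (p : (x, y) ∈ S.G₂) (p' : (S.mul x y p, z) ∈ S.G₂)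
      (q : (y, z) ∈ S.G₂) (q' : (x, S.mul y z q) ∈ S.G₂),
      S.mul (S.mul x y p) z p' = S.mul x (S.mul y z q) q'

/-!
The sources and targets are recovered from the multiplication by cancellation: a left
factor `u` with `u h = h` must be `α h`, since `α h · h = h` too and right translation by
`h` is injective (dually for `β`). Associating `(g β(g)) h`, `(α(g) g) h` and
`g (h β(h))` with a unit in the middle, left and right respectively produces exactly
such equations: `β(g) h = h`, `α(g) (gh) = gh` and `(gh) β(h) = gh`.
-/

namespace Semiloopoid

variable {G : Type*} (S : Semiloopoid G)

theorem mul_congr {g g' h h' : G} (eg : g = g') (eh : h = h') (p : (g, h) ∈ S.G₂)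
    (p' : (g', h') ∈ S.G₂) : S.mul g h p = S.mul g' h' p' := by
  subst eg eh; rfl

theorem eq_α_of_mul_eq_self {u h : G} (p : (u, h) ∈ S.G₂) (e : S.mul u h p = h) :
    u = S.α h :=
  S.right_inj h u (S.α h) p (S.unit_left_comp h) (e.trans (S.unit_left h).symm)

theorem eq_β_of_mul_eq_self {g u : G} (p : (g, u) ∈ S.G₂) (e : S.mul g u p = g) :
    u = S.β g :=
  S.left_inj g u (S.β g) p (S.unit_right_comp g) (e.trans (S.unit_right g).symm)

variable {S}

theorem UnitiesAssoc.exists_assoc_of_left {x y z : G} (hua : S.UnitiesAssoc)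
    (hunit : x ∈ S.M ∨ y ∈ S.M ∨ z ∈ S.M) (p : (x, y) ∈ S.G₂)
    (p' : (S.mul x y p, z) ∈ S.G₂) :
    ∃ (q : (y, z) ∈ S.G₂) (q' : (x, S.mul y z q) ∈ S.G₂),
      S.mul (S.mul x y p) z p' = S.mul x (S.mul y z q) q' := by
  obtain ⟨hdef, hassoc⟩ := hua x y z hunit
  obtain ⟨q, q'⟩ := hdef.mp ⟨p, p'⟩
  exact ⟨q, q', hassoc p p' q q'⟩

theorem UnitiesAssoc.exists_assoc_of_right {x y z : G} (hua : S.UnitiesAssoc)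
    (hunit : x ∈ S.M ∨ y ∈ S.M ∨ z ∈ S.M) (q : (y, z) ∈ S.G₂)
    (q' : (x, S.mul y z q) ∈ S.G₂) :
    ∃ (p : (x, y) ∈ S.G₂) (p' : (S.mul x y p, z) ∈ S.G₂),
      S.mul (S.mul x y p) z p' = S.mul x (S.mul y z q) q' := by
  obtain ⟨hdef, hassoc⟩ := hua x y z hunit
  obtain ⟨p, p'⟩ := hdef.mpr ⟨q, q'⟩
  exact ⟨p, p', hassoc p p' q q'⟩

theorem UnitiesAssoc.β_eq_α {g h : G} (hua : S.UnitiesAssoc) (p : (g, h) ∈ S.G₂) :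
    S.β g = S.α h := by
  have p' : (S.mul g (S.β g) (S.unit_right_comp g), h) ∈ S.G₂ := (S.unit_right g).symm ▸ p
  obtain ⟨q, q', e⟩ :=
    hua.exists_assoc_of_left (Or.inr (Or.inl (S.β_mem g))) (S.unit_right_comp g) p'
  have hcancel : S.mul g (S.mul (S.β g) h q) q' = S.mul g h p :=
    e.symm.trans (S.mul_congr (S.unit_right g) rfl p' p)
  exact S.eq_α_of_mul_eq_self q (S.left_inj g _ h q' p hcancel)

theorem UnitiesAssoc.α_mul {g h : G} (hua : S.UnitiesAssoc) (p : (g, h) ∈ S.G₂) :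
    S.α (S.mul g h p) = S.α g := by
  have p' : (S.mul (S.α g) g (S.unit_left_comp g), h) ∈ S.G₂ := (S.unit_left g).symm ▸ p
  obtain ⟨q, q', e⟩ :=
    hua.exists_assoc_of_left (Or.inl (S.α_mem g)) (S.unit_left_comp g) p'
  have hfix : S.mul (S.α g) (S.mul g h p) q' = S.mul g h p :=
    e.symm.trans (S.mul_congr (S.unit_left g) rfl p' p)
  exact (S.eq_α_of_mul_eq_self q' hfix).symm

theorem UnitiesAssoc.β_mul {g h : G} (hua : S.UnitiesAssoc) (p : (g, h) ∈ S.G₂) :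
    S.β (S.mul g h p) = S.β h := by
  have q' : (g, S.mul h (S.β h) (S.unit_right_comp h)) ∈ S.G₂ := (S.unit_right h).symm ▸ p
  obtain ⟨p₁, p', e⟩ :=
    hua.exists_assoc_of_right (Or.inr (Or.inr (S.β_mem h))) (S.unit_right_comp h) q'
  have hfix : S.mul (S.mul g h p₁) (S.β h) p' = S.mul g h p₁ :=
    e.trans (S.mul_congr rfl (S.unit_right h) q' p₁)
  exact (S.eq_β_of_mul_eq_self p' hfix).symm

end Semiloopoid

/-- If a semiloopoid `G` over `M` satisfies the unities associativity condition,
then for every composable pair `(g,h) ∈ G₂` one has `β(g) = α(h)`,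
`α(gh) = α(g)` and `β(gh) = β(h)`; in particular the anchor map
`(α,β) : G → M×M` respects the multiplication of the pair groupoid `M×M`. -/
theorem semiloopoid_unitiesAssoc_anchor {G : Type*} (S : Semiloopoid G)
    (hua : S.UnitiesAssoc) :
    ∀ (g h : G) (p : (g, h) ∈ S.G₂),
      S.β g = S.α h ∧ S.α (S.mul g h p) = S.α g ∧ S.β (S.mul g h p) = S.β h :=
  fun _ _ p => ⟨hua.β_eq_α p, hua.α_mul p, hua.β_mul p⟩
end
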